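/- Let X be a finite abelian group and ξ_1,…,ξ_n (n ≥ 2) independent X-valued random variables with distributions μ_i. Let α_{ij} ∈ Aut(X) with α_{1j} = α_{i1} = Id for all i,j. If the linear forms L_j = Σ_{i=1}^n α_{ij} ξ_i, j = 1,…,n, are independent, then there exist a single subgroup K of X and elements x_i ∈ X such that μ_i = m_K * E_{x_i} for all i = 1,…,n (the same subgroup K for every i). -/

import Mathlib

/-- A probability distribution on a finite set, given by its mass function. -/
def IsDist {X : Type*} [Fintype X] (μ : X → ℝ) : Prop :=
  (∀ x, 0 ≤ μ x) ∧ ∑ x, μ x = 1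

/-- The characteristic function `μ̂(y) = ∑_x (x,y) μ({x})` of a distribution `μ`
on a finite abelian group `X`, where `y` is a character of `X`. -/
noncomputable def charFun {X : Type*} [AddCommGroup X] [Fintype X]
    (μ : X → ℝ) (y : AddChar X ℂ) : ℂ :=
  ∑ x, (μ x : ℂ) * y x

/-- The Haar (uniform) distribution `m_K` on a subgroup `K` of `X`. -/
noncomputable def haarDist {X : Type*} [AddCommGroup X] [Fintype X]
    (K : AddSubgroup X) : X → ℝ :=
  (K : Set X).indicator fun _ => ((Nat.card K : ℝ))⁻¹

/-- The degenerate distribution `E_{x₀}` concentrated at `x₀`. -/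
def diracDist {X : Type*} [DecidableEq X] (x₀ : X) : X → ℝ :=
  fun x => if x = x₀ then 1 else 0

/-- Convolution of two distributions on a finite abelian group. -/
noncomputable def convDist {X : Type*} [AddCommGroup X] [Fintype X]
    (μ ν : X → ℝ) : X → ℝ :=
  fun x => ∑ t, μ t * ν (x - t)

/-- `μ` is an idempotent distribution: a shift of the Haar distribution on a subgroup. -/
noncomputable def IsIdempotent {X : Type*} [AddCommGroup X] [Fintype X] [DecidableEq X]
    (μ : X → ℝ) : Prop :=
  ∃ (K : AddSubgroup X) (x₀ : X), μ = convDist (haarDist K) (diracDist x₀)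

/-- The linear forms `L_j = ∑_i A i j (ξ i)`, `j = 1,…,k`, of independent random
variables `ξ i` with distributions `μ i` are independent: the joint distribution of
`(L_1, …, L_k)` equals the product of the marginal distributions. -/
def FormsIndep {X : Type*} [AddCommGroup X] [Fintype X] [DecidableEq X] {n k : ℕ}
    (μ : Fin n → X → ℝ) (A : Fin n → Fin k → X → X) : Prop :=
  ∀ x : Fin k → X,
    (∑ t : Fin n → X, if (∀ j, ∑ i, A i j (t i) = x j) then ∏ i, μ i (t i) else 0) =
    ∏ j, ∑ t : Fin n → X, if (∑ i, A i j (t i) = x j) then ∏ i, μ i (t i) else 0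

/-- The adjoint `α̃` of an endomorphism `α` of `X`, acting on the character group:
`(α x, y) = (x, α̃ y)`. -/
noncomputable def adjChar {X : Type*} [AddCommGroup X] (α : X →+ X)
    (y : AddChar X ℂ) : AddChar X ℂ :=
  y.compAddMonoidHom α

/-!
Entropy argument. Write `λ_j` for the law of `L_j` and `H` for Shannon entropy. Each `λ_j`
is a mixture of translates of the law of `α_{kj} ξ_k`, so by concavity `H(μ_k) ≤ H(λ_j)` for
all `j, k`. Independence of the forms gives
`∑ H(λ_j) = H(L_1, …, L_n) ≤ H(ξ_1, …, ξ_n) = ∑ H(μ_i)`, so all these entropies coincide.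
In the first column `L_1 = ∑ ξ_i`, and strict concavity then says that `μ_k` shifted by any
value of `∑_{i ≠ k} ξ_i` is `λ_1`. Hence differences of support points of `μ_i` are periods
of `λ_1`, and every `μ_i` is a translate of the Haar distribution of that period group.
-/

open Real Finset

section Entropy

variable {S U : Type*} [Fintype S]

noncomputable def entropy (p : S → ℝ) : ℝ := ∑ s, negMulLog (p s)

lemma entropy_comp_equiv [Fintype U] (e : S ≃ U) (p : U → ℝ) :
    entropy (p ∘ e) = entropy p :=
  e.sum_comp fun u => negMulLog (p u)

noncomputable def mapDist [DecidableEq U] (P : S → ℝ) (T : S → U) : U → ℝ :=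
  fun u => ∑ s, if T s = u then P s else 0

variable [DecidableEq U] {P : S → ℝ}

lemma sum_mapDist_mul [Fintype U] (P : S → ℝ) (T : S → U) (g : U → ℝ) :
    ∑ u, mapDist P T u * g u = ∑ s, P s * g (T s) := by
  simp only [mapDist, sum_mul, ite_mul, zero_mul]
  rw [sum_comm]
  simp

lemma IsDist.mapDist [Fintype U] (hP : IsDist P) (T : S → U) : IsDist (mapDist P T) :=
  ⟨fun u => sum_nonneg fun s _ => by split_ifs <;> simp [hP.1 s],
    by simpa [hP.2] using sum_mapDist_mul P T 1⟩

lemma le_mapDist_apply (hP : ∀ s, 0 ≤ P s) (T : S → U) (s : S) :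
    P s ≤ mapDist P T (T s) := by
  calc P s = if T s = T s then P s else 0 := (if_pos rfl).symm
    _ ≤ mapDist P T (T s) := single_le_sum (f := fun s' => if T s' = T s then P s' else 0)
        (fun s' _ => by split_ifs <;> simp [hP s']) (mem_univ s)

lemma mapDist_equiv (P : S → ℝ) (e : S ≃ U) : mapDist P e = P ∘ e.symm := by
  funext u
  rw [mapDist,
    Fintype.sum_eq_single (e.symm u) fun s hs => if_neg fun h => hs (e.eq_symm_apply.2 h)]
  simp

lemma negMulLog_sum_le {ι : Type*} [Fintype ι] {v : ι → ℝ} (hv : ∀ i, 0 ≤ v i) :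
    negMulLog (∑ i, v i) ≤ ∑ i, negMulLog (v i) := by
  simp only [negMulLog_eq_neg, sum_mul, ← sum_neg_distrib]
  refine sum_le_sum fun i _ => neg_le_neg ?_
  rcases (hv i).eq_or_lt with h | h
  · simp [← h]
  · exact mul_le_mul_of_nonneg_left
      (log_le_log h (single_le_sum (fun j _ => hv j) (mem_univ i))) h.le

lemma entropy_mapDist_le [Fintype U] (hP : ∀ s, 0 ≤ P s) (T : S → U) :
    entropy (mapDist P T) ≤ entropy P := by
  calc entropy (mapDist P T)
      ≤ ∑ u, ∑ s, negMulLog (if T s = u then P s else 0) :=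
        sum_le_sum fun u _ => negMulLog_sum_le fun s => by split_ifs <;> simp [hP s]
    _ = entropy P := by
        rw [sum_comm]
        refine sum_congr rfl fun s _ => ?_
        simp [apply_ite negMulLog]

end Entropy

section Product

variable {ι X : Type*} [Fintype ι] [DecidableEq ι] [Fintype X] {p : ι → X → ℝ}

def piDist (p : ι → X → ℝ) : (ι → X) → ℝ := fun t => ∏ i, p i (t i)

lemma IsDist.piDist (hp : ∀ i, IsDist (p i)) : IsDist (piDist p) :=
  ⟨fun t => prod_nonneg fun i _ => (hp i).1 (t i),
    (Fintype.prod_sum p).symm.trans (prod_eq_one fun i _ => (hp i).2)⟩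

lemma sum_piDist_mul_apply (hp : ∀ i, ∑ x, p i x = 1) (k : ι) (f : X → ℝ) :
    ∑ t, piDist p t * f (t k) = ∑ x, p k x * f x := by
  have hfactor : ∀ t : ι → X,
      piDist p t * f (t k) = ∏ i, p i (t i) * if i = k then f (t i) else 1 := fun t => by
    rw [prod_mul_distrib, prod_ite_eq', if_pos (mem_univ k)]
    rfl
  rw [Fintype.sum_congr _ _ hfactor,
    ← Fintype.prod_sum fun i x => p i x * if i = k then f x else 1,
    Fintype.prod_eq_mul_prod_subtype_ne _ k, prod_eq_one fun i _ => by simp [i.2, hp]]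
  simp

lemma entropy_piDist (hp : ∀ i, ∑ x, p i x = 1) :
    entropy (piDist p) = ∑ i, entropy (p i) := by
  have hlog : ∀ t, negMulLog (piDist p t) = ∑ i, piDist p t * -log (p i (t i)) := fun t => by
    by_cases ht : piDist p t = 0
    · simp [ht]
    · rw [← mul_sum, sum_neg_distrib, ← log_prod fun i _ => ?_, negMulLog, piDist]
      · ring
      · exact fun h => ht (prod_eq_zero (mem_univ i) h)
  simp only [entropy, hlog]
  rw [sum_comm]
  refine sum_congr rfl fun i _ => ?_
  rw [sum_piDist_mul_apply hp i fun x => -log (p i x)]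
  simp [negMulLog]

end Product

section Convolution

variable {X : Type*} [AddCommGroup X] [Fintype X] {w p : X → ℝ}

lemma convDist_diracDist [DecidableEq X] (μ : X → ℝ) (a x : X) :
    convDist μ (diracDist a) x = μ (x - a) := by
  rw [convDist, Fintype.sum_eq_single (x - a) fun t ht => ?_]
  · simp [diracDist]
  · have : x - t ≠ a := fun h => ht (by rw [← h, sub_sub_cancel])
    simp [diracDist, this]

lemma sum_mul_negMulLog_le_negMulLog_convDist (hw : IsDist w) (hp : ∀ x, 0 ≤ p x) (s : X) :
    ∑ t, w t * negMulLog (p (s - t)) ≤ negMulLog (convDist w p s) := by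
  simpa [convDist] using concaveOn_negMulLog.le_map_sum (t := univ) (fun t _ => hw.1 t) hw.2
    fun t _ => Set.mem_Ici.2 (hp (s - t))

lemma sum_sum_mul_negMulLog (hw : ∑ t, w t = 1) (p : X → ℝ) :
    ∑ s, ∑ t, w t * negMulLog (p (s - t)) = entropy p := by
  rw [sum_comm]
  calc ∑ t, ∑ s, w t * negMulLog (p (s - t)) = ∑ t, w t * entropy p :=
        sum_congr rfl fun t _ => by
          rw [← mul_sum]
          exact congrArg _ ((Equiv.subRight t).sum_comp fun x => negMulLog (p x))
    _ = entropy p := by rw [← sum_mul, hw, one_mul]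

lemma entropy_le_entropy_convDist (hw : IsDist w) (hp : ∀ x, 0 ≤ p x) :
    entropy p ≤ entropy (convDist w p) :=
  (sum_sum_mul_negMulLog hw.2 p).symm.trans_le
    (sum_le_sum fun s _ => sum_mul_negMulLog_le_negMulLog_convDist hw hp s)

-- The equality case of Jensen's inequality for the strictly concave `negMulLog`.
lemma apply_sub_eq_convDist_of_entropy_eq (hw : IsDist w) (hp : ∀ x, 0 ≤ p x)
    (h : entropy (convDist w p) = entropy p) {t : X} (ht : w t ≠ 0) (s : X) :
    p (s - t) = convDist w p s := by
  have hs : negMulLog (convDist w p s) = ∑ t, w t * negMulLog (p (s - t)) :=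
    ((sum_eq_sum_iff_of_le fun s _ => sum_mul_negMulLog_le_negMulLog_convDist hw hp s).1
      (by rw [sum_sum_mul_negMulLog hw.2, ← h]; rfl) s (mem_univ s)).symm
  have := (strictConcaveOn_negMulLog.map_sum_eq_iff' (t := univ) (fun t _ => hw.1 t) hw.2
    fun t _ => Set.mem_Ici.2 (hp (s - t))).1 (by simpa [convDist] using hs) t (mem_univ t) ht
  simpa [convDist] using this

end Convolution

section LinearForms

variable {ι X : Type*} [Fintype ι] [DecidableEq ι] [AddCommGroup X] [Fintype X] [DecidableEq X]
  {μ : ι → X → ℝ}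

noncomputable def linearFormDist (μ : ι → X → ℝ) (a : ι → X → X) : X → ℝ :=
  mapDist (piDist μ) fun t => ∑ i, a i (t i)

lemma IsDist.linearFormDist (hμ : ∀ i, IsDist (μ i)) (a : ι → X → X) :
    IsDist (linearFormDist μ a) :=
  (IsDist.piDist hμ).mapDist _

lemma linearFormDist_eq_convDist (μ : ι → X → ℝ) (a : ι → X → X) (k : ι) :
    linearFormDist μ a =
      convDist (linearFormDist (fun i : {i // i ≠ k} => μ i) fun i => a i)
        (mapDist (μ k) (a k)) := by
  funext s
  unfold linearFormDist
  rw [convDist, sum_mapDist_mul]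
  simp only [mapDist, piDist, mul_sum]
  rw [← (Equiv.funSplitAt k X).symm.sum_comp, Fintype.sum_prod_type, sum_comm]
  refine sum_congr rfl fun r _ => sum_congr rfl fun x _ => ?_
  have hsum : ∑ i, a i ((Equiv.funSplitAt k X).symm (x, r) i) =
      a k x + ∑ i : {i // i ≠ k}, a i (r i) := by
    rw [Fintype.sum_eq_add_sum_subtype_ne _ k]
    exact congrArg₂ _ (by simp) (sum_congr rfl fun i _ => by simp [i.2])
  have hprod : ∏ i, μ i ((Equiv.funSplitAt k X).symm (x, r) i) =
      μ k x * ∏ i : {i // i ≠ k}, μ i (r i) := by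
    rw [Fintype.prod_eq_mul_prod_subtype_ne _ k]
    exact congrArg₂ _ (by simp) (prod_congr rfl fun i _ => by simp [i.2])
  simp only [hsum, hprod, eq_sub_iff_add_eq, mul_ite, mul_zero, mul_comm (μ k x)]

lemma entropy_le_entropy_linearFormDist (hμ : ∀ i, IsDist (μ i)) (a : ι → X → X) (k : ι)
    (hk : Function.Bijective (a k)) : entropy (μ k) ≤ entropy (linearFormDist μ a) := by
  have hk' : entropy (mapDist (μ k) (a k)) = entropy (μ k) := by
    change entropy (mapDist (μ k) (Equiv.ofBijective _ hk)) = _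
    rw [mapDist_equiv, entropy_comp_equiv]
  rw [linearFormDist_eq_convDist μ a k, ← hk']
  exact entropy_le_entropy_convDist (IsDist.linearFormDist (fun i : {i // i ≠ k} => hμ i) _)
    ((hμ k).mapDist _).1

lemma apply_sub_sum_eq_of_entropy_eq (hμ : ∀ i, IsDist (μ i)) (k : ι)
    (h : entropy (linearFormDist μ fun _ => id) = entropy (μ k)) (r : {i // i ≠ k} → X)
    (hr : ∀ i : {i // i ≠ k}, μ i (r i) ≠ 0) (s : X) :
    μ k (s - ∑ i, r i) = linearFormDist μ (fun _ => id) s := by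
  have hsplit := linearFormDist_eq_convDist μ (fun _ => id) k
  rw [show mapDist (μ k) id = μ k from mapDist_equiv (μ k) (Equiv.refl X)] at hsplit
  rw [hsplit] at h ⊢
  refine apply_sub_eq_convDist_of_entropy_eq
    (IsDist.linearFormDist (fun i : {i // i ≠ k} => hμ i) _) (hμ k).1 h (ne_of_gt ?_) s
  exact (prod_pos (s := univ) (f := fun i : {i // i ≠ k} => μ i (r i))
    fun i _ => ((hμ i).1 _).lt_of_ne' (hr i)).trans_le
    (le_mapDist_apply (IsDist.piDist fun i : {i // i ≠ k} => hμ i).1 _ r)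

end LinearForms

lemma FormsIndep.mapDist_piDist_eq {X : Type*} [AddCommGroup X] [Fintype X] [DecidableEq X]
    {n m : ℕ} {μ : Fin n → X → ℝ} {A : Fin n → Fin m → X → X} (h : FormsIndep μ A) :
    mapDist (piDist μ) (fun t j => ∑ i, A i j (t i)) =
      piDist fun j => linearFormDist μ fun i => A i j := by
  funext x
  exact (sum_congr rfl fun t _ => if_congr funext_iff rfl rfl).trans (h x)

lemma FormsIndep.sum_entropy_le {X : Type*} [AddCommGroup X] [Fintype X] [DecidableEq X]
    {n m : ℕ} {μ : Fin n → X → ℝ} {A : Fin n → Fin m → X → X} (h : FormsIndep μ A)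
    (hμ : ∀ i, IsDist (μ i)) :
    ∑ j, entropy (linearFormDist μ fun i => A i j) ≤ ∑ i, entropy (μ i) := by
  calc ∑ j, entropy (linearFormDist μ fun i => A i j)
      = entropy (piDist fun j => linearFormDist μ fun i => A i j) :=
        (entropy_piDist fun j => (IsDist.linearFormDist hμ _).2).symm
    _ = entropy (mapDist (piDist μ) fun t j => ∑ i, A i j (t i)) := by rw [h.mapDist_piDist_eq]
    _ ≤ entropy (piDist μ) := entropy_mapDist_le (IsDist.piDist hμ).1 _
    _ = ∑ i, entropy (μ i) := entropy_piDist fun i => (hμ i).2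

section Haar

variable {X : Type*} [AddCommGroup X]

def periods (ν : X → ℝ) : AddSubgroup X where
  carrier := {y | ∀ s, ν (s + y) = ν s}
  zero_mem' s := by rw [add_zero]
  add_mem' {y z} hy hz s := by rw [← add_assoc, hz, hy]
  neg_mem' {y} hy s := by rw [← hy (s + -y), neg_add_cancel_right]

lemma sub_mem_periods {μ ν : X → ℝ} {u v : X} (hu : ∀ s, μ (s - u) = ν s)
    (hv : ∀ s, μ (s - v) = ν s) : u - v ∈ periods ν := fun s => by
  rw [← hu, ← hv]
  congr 1
  abel

lemma eq_convDist_haarDist [Fintype X] [DecidableEq X] {ν : X → ℝ} (hν : ∑ x, ν x = 1)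
    (K : AddSubgroup X) (a : X) (hK : ∀ y ∈ K, ∀ s, ν (s + y) = ν s)
    (hsupp : ∀ x, ν x ≠ 0 → x - a ∈ K) :
    ν = convDist (haarDist K) (diracDist a) := by
  have hν' : ∀ x, ν x = (K : Set X).indicator (fun _ => ν a) (x - a) := fun x => by
    by_cases hx : x - a ∈ K
    · simpa [hx] using hK _ hx a
    · by_contra h
      exact hx (hsupp x fun h' => h (by simp [h', hx]))
  have hcard : ν a * Nat.card K = 1 := by
    classical
    rw [← hν, Fintype.sum_congr _ _ hν',
      Fintype.sum_equiv (Equiv.subRight a) (fun x => (K : Set X).indicator (fun _ => ν a) (x - a))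
        ((K : Set X).indicator fun _ => ν a) fun _ => rfl, sum_indicator_eq_sum_filter]
    simp [Nat.card_eq_fintype_card, Fintype.card_subtype, mul_comm]
  funext x
  rw [convDist_diracDist, haarDist, hν' x, eq_inv_of_mul_eq_one_left hcard]

end Haar

lemma eq_of_forall_le_of_sum_le {ι : Type*} [Fintype ι] {a b : ι → ℝ}
    (hab : ∀ j k, a k ≤ b j) (hsum : ∑ j, b j ≤ ∑ k, a k) (j k : ι) : b j = a k := by
  have hdiag : ∀ i, a i = b i := fun i =>
    (sum_eq_sum_iff_of_le fun i _ => hab i i).1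
      (le_antisymm (sum_le_sum fun i _ => hab i i) hsum) i (mem_univ i)
  linarith [hab j k, hab k j, hdiag j, hdiag k]

theorem exists_haarDist_of_forall_sub_sum_eq {ι X : Type*} [Fintype ι] [DecidableEq ι]
    [Nontrivial ι] [AddCommGroup X] [Fintype X] [DecidableEq X] {μ : ι → X → ℝ}
    (hμ : ∀ i, IsDist (μ i)) {ν : X → ℝ}
    (h : ∀ k (r : {i // i ≠ k} → X), (∀ i : {i // i ≠ k}, μ i (r i) ≠ 0) →
      ∀ s, μ k (s - ∑ i, r i) = ν s) :
    ∃ K : AddSubgroup X, ∀ i, ∃ x₀ : X, μ i = convDist (haarDist K) (diracDist x₀) := by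
  choose A hA using fun i => exists_ne_zero_of_sum_ne_zero ((hμ i).2.trans_ne one_ne_zero)
  refine ⟨periods ν, fun i => ⟨A i, eq_convDist_haarDist (hμ i).2 _ _ ?_ ?_⟩⟩
  · intro y hy s
    have hshift : ∀ t, μ i t = ν (t + ∑ l : {l // l ≠ i}, A l) := fun t => by
      rw [← h i (fun l => A l) (fun l => (hA l).2), add_sub_cancel_right]
    rw [hshift, hshift, add_right_comm, hy]
  · intro x hx
    obtain ⟨k, hki⟩ := exists_ne i
    have hik : i ≠ k := hki.symm
    set r : {l // l ≠ k} → X := fun l => A l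
    have hr : ∀ l : {l // l ≠ k}, μ l (Function.update r ⟨i, hik⟩ x l) ≠ 0 := fun l => by
      by_cases hl : l = ⟨i, hik⟩
      · subst hl
        simpa using hx
      · simpa [Function.update_of_ne hl, r] using (hA l).2
    have hdiff : ∑ l, Function.update r ⟨i, hik⟩ x l - ∑ l, r l = x - A i := by
      rw [Fintype.sum_eq_add_sum_subtype_ne _ ⟨i, hik⟩,
        Fintype.sum_eq_add_sum_subtype_ne r ⟨i, hik⟩, Function.update_self,
        sum_congr rfl fun l _ => Function.update_of_ne l.2 x r]
      exact add_sub_add_right_eq_sub _ _ _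
    rw [← hdiff]
    exact sub_mem_periods (h k _ hr) (h k r fun l => (hA l).2)

/-- Remark 1: if moreover `α_{1j} = α_{i1} = Id`, then the `μ_i` are
shifts of the Haar distribution on one and the same subgroup `K` of `X`. -/
theorem stmt12 {X : Type*} [AddCommGroup X] [Fintype X] [DecidableEq X]
    (n : ℕ) (hn : 2 ≤ n)
    (μ : Fin n → X → ℝ) (hμ : ∀ i, IsDist (μ i))
    (α : Fin n → Fin n → (X ≃+ X))
    (hα2 : ∀ i, α i ⟨0, by omega⟩ = AddEquiv.refl X)
    (hindep : FormsIndep μ (fun i j => ⇑(α i j))) :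
    ∃ K : AddSubgroup X, ∀ i, ∃ x₀ : X,
      μ i = convDist (haarDist K) (diracDist x₀) := by
  have : Nontrivial (Fin n) := Fin.nontrivial_iff_two_le.2 hn
  have hcol : (fun i => ⇑(α i ⟨0, by omega⟩)) = fun _ => id :=
    funext fun i => by rw [hα2]; rfl
  have hle : ∀ j k, entropy (μ k) ≤ entropy (linearFormDist μ fun i => α i j) :=
    fun j k => entropy_le_entropy_linearFormDist hμ _ k (α k j).bijective
  have heq : ∀ k, entropy (linearFormDist μ fun _ => id) = entropy (μ k) := fun k => by
    rw [← hcol]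
    exact eq_of_forall_le_of_sum_le hle (hindep.sum_entropy_le hμ) _ k
  exact exists_haarDist_of_forall_sub_sum_eq hμ fun k r hr s =>
    apply_sub_sum_eq_of_entropy_eq hμ k (heq k) r hr s
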